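/- For the cycle C_n on n ≥ 3 vertices, the middle 3-rainbow domination number is γ*_{r3}(C_n) = (4n+2)/3 if n ≡ 1 (mod 3), (4n+1)/3 if n ≡ 2 (mod 3), and 4n/3 if n ≡ 0 (mod 3). -/

import Mathlib

open SimpleGraph Finset

/-- A `k`-rainbow dominating function on a graph `H`. -/
def IsRDF {W : Type*} (H : SimpleGraph W) (k : ℕ) (f : W → Finset (Fin k)) : Prop :=
  ∀ w, f w = ∅ → ∀ c : Fin k, ∃ u, H.Adj w u ∧ c ∈ f u

/-- The weight of a rainbow dominating function. -/
noncomputable def rdfWeight {W : Type*} [Fintype W] {k : ℕ} (f : W → Finset (Fin k)) : ℕ :=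
  ∑ w, (f w).card

/-- The `k`-rainbow domination number of a graph. -/
noncomputable def rdn {W : Type*} [Fintype W] (H : SimpleGraph W) (k : ℕ) : ℕ :=
  sInf {n | ∃ f : W → Finset (Fin k), IsRDF H k f ∧ rdfWeight f = n}

/-- The middle graph of `G`, on vertex set `V(G) ⊕ E(G)`. -/
def middleGraph {V : Type*} (G : SimpleGraph V) : SimpleGraph (V ⊕ G.edgeSet) where
  Adj x y :=
    match x, y with
    | Sum.inl _, Sum.inl _ => False
    | Sum.inl v, Sum.inr e => v ∈ (e : Sym2 V)
    | Sum.inr e, Sum.inl v => v ∈ (e : Sym2 V)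
    | Sum.inr e, Sum.inr f => e ≠ f ∧ ∃ v, v ∈ (e : Sym2 V) ∧ v ∈ (f : Sym2 V)
  symm := by
    refine ⟨?_⟩
    rintro (v | e) (w | f) h
    · exact h.elim
    · exact h
    · exact h
    · exact ⟨Ne.symm h.1, h.2.imp fun v hv => ⟨hv.2, hv.1⟩⟩
  loopless := by
    refine ⟨?_⟩
    rintro (v | e) h
    · exact h.elim
    · exact h.1 rfl

/-- The middle `k`-rainbow domination number `γ*_{rk}(G)`. -/
noncomputable def mrdn {V : Type*} [Fintype V] (G : SimpleGraph V) (k : ℕ) : ℕ :=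
  letI := Classical.decEq V
  letI : DecidableRel G.Adj := fun _ _ => Classical.dec _
  rdn (middleGraph G) k

/-- The `k`-rainbow domatic number: the maximum size of a family of `k`-rainbow
dominating functions with `∑ i |f i v| ≤ k` for each vertex `v`. -/
noncomputable def rdomatic {W : Type*} (H : SimpleGraph W) (k : ℕ) : ℕ :=
  sSup {d | ∃ F : Fin d → W → Finset (Fin k), Function.Injective F ∧
    (∀ i, IsRDF H k (F i)) ∧ ∀ w, (∑ i, (F i w).card) ≤ k}

/-- The matching number `α'(G)`. -/
noncomputable def matchingNumber {V : Type*} [Fintype V] (G : SimpleGraph V) : ℕ :=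
  sSup {n | ∃ M : Finset (Sym2 V), ↑M ⊆ G.edgeSet ∧
    (∀ e ∈ M, ∀ f ∈ M, e ≠ f → ∀ v : V, ¬(v ∈ e ∧ v ∈ f)) ∧ M.card = n}


/-!
Write `e i = s(i, i + 1)` for the edges of `C_n`; in the middle graph the vertex `i` sees
`e (i - 1), e i`, and `e i` sees `i, i + 1, e (i - 1), e (i + 1)`. For a 3-rainbow dominating
function `f` put `a i = |f i|` and `b i = |f (e i)|`, and split the weight of each edge evenly
between its ends. Vertex `i` then carries `a i + (b (i - 1) + b i) / 2`, which is at least `3 / 2`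
unless `a i = 1` and both incident edges are empty, when it is `1`. Domination of those empty edges
shows that the neighbours of such a deficient vertex are not deficient, and that a vertex between
two deficient ones carries at least `2`. Moving `1 / 6` from every vertex to each deficient
neighbour leaves at least `4 / 3` everywhere, so the weight is at least `4n / 3`.

Conversely, labelling `e i` by `{0, 1, 2}` for `i ≡ 0` and the vertex `i` by `{0}` for `i ≡ 2`
(mod 3) is rainbow dominating of weight `⌈4n / 3⌉`, after a repair at the end when `n ≡ 1`.
-/

lemma Fin.val_add_one_eq_ite {N : ℕ} [NeZero N] (i : Fin N) :
    ((i + 1 : Fin N) : ℕ) = if (i : ℕ) + 1 = N then 0 else (i : ℕ) + 1 := by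
  obtain ⟨M, rfl⟩ := Nat.exists_eq_add_one_of_ne_zero (NeZero.ne N)
  rw [Fin.val_add_one]
  simp only [Fin.ext_iff, Fin.val_last, Nat.add_right_cancel_iff]

lemma Fin.val_sub_one_eq_ite {N : ℕ} [NeZero N] (i : Fin N) :
    ((i - 1 : Fin N) : ℕ) = if (i : ℕ) = 0 then N - 1 else (i : ℕ) - 1 := by
  split_ifs with h
  · obtain ⟨M, rfl⟩ := Nat.exists_eq_add_one_of_ne_zero (NeZero.ne N)
    rw [show i = 0 from Fin.ext h, zero_sub, Fin.coe_neg_one, Nat.add_sub_cancel]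
  · exact Fin.val_sub_one_of_ne_zero (Fin.ne_of_val_ne h)

lemma Fin.sum_comp_sub_one {N : ℕ} [NeZero N] {M : Type*} [AddCommMonoid M] (f : Fin N → M) :
    ∑ i, f (i - 1) = ∑ i, f i :=
  Equiv.sum_comp (Equiv.subRight 1) f

lemma Fin.sum_comp_add_one {N : ℕ} [NeZero N] {M : Type*} [AddCommMonoid M] (f : Fin N → M) :
    ∑ i, f (i + 1) = ∑ i, f i :=
  Equiv.sum_comp (Equiv.addRight 1) f

theorem four_mul_le_three_mul_sum_of_cyclic_cover {N : ℕ} [NeZero N] (a b : Fin N → ℕ)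
    (hV : ∀ i, a i = 0 → 3 ≤ b (i - 1) + b i)
    (hE : ∀ i, b i = 0 → 3 ≤ b (i - 1) + b (i + 1) + a i + a (i + 1)) :
    4 * N ≤ 3 * ∑ i, (a i + b i) := by
  let d : Fin N → ℕ := fun i => if a i = 1 ∧ b (i - 1) = 0 ∧ b i = 0 then 1 else 0
  -- `d` marks the deficient vertices; this is the discharging rule with charges scaled by `6`
  have discharge (i : Fin N) :
      8 + d (i - 1) + d (i + 1) ≤ 6 * a i + 3 * b (i - 1) + 3 * b i + 2 * d i := by
    have := hV i
    have := hE i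
    have := hE (i - 1)
    simp only [d, sub_add_cancel, add_sub_cancel_right] at *
    split_ifs <;> omega
  have hsum := sum_le_sum fun i (_ : i ∈ univ) => discharge i
  simp only [sum_add_distrib, ← mul_sum, sum_const, card_univ, Fintype.card_fin, smul_eq_mul,
    Fin.sum_comp_sub_one, Fin.sum_comp_add_one] at hsum ⊢
  omega

section RainbowDomination

variable {W : Type*} {H : SimpleGraph W} {k : ℕ}

lemma isRDF_const_univ : IsRDF H k fun _ => univ :=
  fun _ hw c => absurd (hw ▸ mem_univ c) (notMem_empty c)

lemma isRDF_of_forall_exists_union {f : W → Finset (Fin k)}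
    (h : ∀ w, f w = ∅ → ∃ u₁ u₂, H.Adj w u₁ ∧ H.Adj w u₂ ∧ f u₁ ∪ f u₂ = univ) :
    IsRDF H k f := by
  intro w hw c
  obtain ⟨u₁, u₂, h₁, h₂, hcover⟩ := h w hw
  rcases mem_union.1 (hcover ▸ mem_univ c) with hc | hc
  · exact ⟨u₁, h₁, hc⟩
  · exact ⟨u₂, h₂, hc⟩

lemma IsRDF.le_sum_card {f : W → Finset (Fin k)} (hf : IsRDF H k f) {w : W} (hw : f w = ∅)
    {ι : Type*} [Fintype ι] (nbr : ι → W) (hnbr : ∀ u, H.Adj w u → u ∈ Set.range nbr) :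
    k ≤ ∑ j, (f (nbr j)).card := by
  classical
  have hcover : (univ : Finset (Fin k)) ⊆ univ.biUnion (f ∘ nbr) := by
    intro c _
    obtain ⟨u, hu, hc⟩ := hf w hw c
    obtain ⟨j, rfl⟩ := hnbr u hu
    exact mem_biUnion.2 ⟨j, mem_univ j, hc⟩
  simpa using (card_le_card hcover).trans card_biUnion_le

variable [Fintype W]

lemma rdn_le_rdfWeight {f : W → Finset (Fin k)} (hf : IsRDF H k f) : rdn H k ≤ rdfWeight f :=
  Nat.sInf_le ⟨f, hf, rfl⟩

lemma exists_isRDF_rdfWeight_eq_rdn (H : SimpleGraph W) (k : ℕ) :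
    ∃ f, IsRDF H k f ∧ rdfWeight f = rdn H k :=
  Nat.sInf_mem (s := {n | ∃ f, IsRDF H k f ∧ rdfWeight f = n}) ⟨_, _, isRDF_const_univ, rfl⟩

end RainbowDomination

lemma rdfWeight_sum {V E : Type*} [Fintype V] [Fintype E] {k : ℕ} (f : V ⊕ E → Finset (Fin k)) :
    rdfWeight f = ∑ v, (f (.inl v)).card + ∑ e, (f (.inr e)).card :=
  Fintype.sum_sum_type _

section MiddleGraph

variable {V : Type*} {G : SimpleGraph V} {v w : V} {e e' : G.edgeSet}

@[simp] lemma middleGraph_adj_inl_inl : ¬(middleGraph G).Adj (.inl v) (.inl w) := id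

@[simp] lemma middleGraph_adj_inl_inr : (middleGraph G).Adj (.inl v) (.inr e) ↔ v ∈ (e : Sym2 V) :=
  Iff.rfl

@[simp] lemma middleGraph_adj_inr_inl : (middleGraph G).Adj (.inr e) (.inl v) ↔ v ∈ (e : Sym2 V) :=
  Iff.rfl

@[simp] lemma middleGraph_adj_inr_inr :
    (middleGraph G).Adj (.inr e) (.inr e') ↔ e ≠ e' ∧ ∃ v, v ∈ (e : Sym2 V) ∧ v ∈ (e' : Sym2 V) :=
  Iff.rfl

end MiddleGraph

section CycleEdges

variable {n : ℕ}

def cycleEdge (n : ℕ) (i : Fin (n + 3)) : (cycleGraph (n + 3)).edgeSet :=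
  ⟨s(i, i + 1), cycleGraph_adj.2 (Or.inr (add_sub_cancel_left i 1))⟩

lemma mem_cycleEdge {v i : Fin (n + 3)} : v ∈ (cycleEdge n i : Sym2 _) ↔ v = i ∨ v = i + 1 :=
  Sym2.mem_iff

lemma cycleEdge_injective : Function.Injective (cycleEdge n) := by
  intro i j h
  rcases Sym2.eq_iff.1 (congrArg Subtype.val h) with ⟨hij, -⟩ | ⟨hij, hji⟩
  · exact hij
  · have h := congrArg Fin.val (hij ▸ hji : j + 1 + 1 = j)
    rw [Fin.val_add_one_eq_ite, Fin.val_add_one_eq_ite] at h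
    split_ifs at h <;> omega

lemma cycleEdge_surjective : Function.Surjective (cycleEdge n) := by
  rintro ⟨e, he⟩
  induction e using Sym2.ind with
  | _ u v =>
    rw [mem_edgeSet, cycleGraph_adj, sub_eq_iff_eq_add', sub_eq_iff_eq_add'] at he
    rcases he with rfl | rfl
    · exact ⟨v, Subtype.ext Sym2.eq_swap⟩
    · exact ⟨u, rfl⟩

noncomputable def cycleEdgeEquiv (n : ℕ) : Fin (n + 3) ≃ (cycleGraph (n + 3)).edgeSet :=
  Equiv.ofBijective _ ⟨cycleEdge_injective, cycleEdge_surjective⟩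

lemma middleGraph_cycleGraph_adj_inl_inr {v i : Fin (n + 3)} :
    (middleGraph (cycleGraph (n + 3))).Adj (.inl v) (.inr (cycleEdge n i)) ↔ v = i ∨ v = i + 1 :=
  middleGraph_adj_inl_inr.trans mem_cycleEdge

lemma middleGraph_cycleGraph_adj_inr_inr {i j : Fin (n + 3)} :
    (middleGraph (cycleGraph (n + 3))).Adj (.inr (cycleEdge n i)) (.inr (cycleEdge n j)) ↔
      j = i - 1 ∨ j = i + 1 := by
  have h10 : (1 : Fin (n + 3)) ≠ 0 := one_ne_zero
  simp only [middleGraph_adj_inr_inr, mem_cycleEdge, ne_eq, cycleEdge_injective.eq_iff]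
  constructor
  · rintro ⟨hne, v, hi | hi, hj | hj⟩ <;> rw [hi] at hj
    · exact absurd hj hne
    · exact Or.inl (eq_sub_of_add_eq hj.symm)
    · exact Or.inr hj.symm
    · exact absurd (add_right_cancel hj) hne
  · rintro (rfl | rfl)
    · exact ⟨fun h => h10 (by simpa using congrArg (· - i) h.symm), i, Or.inl rfl,
        Or.inr (sub_add_cancel i 1).symm⟩
    · exact ⟨fun h => h10 (by simpa using congrArg (· - i) h.symm), i + 1, Or.inr rfl, Or.inl rfl⟩

lemma middleGraph_cycleGraph_inl_adj_mem_range (i : Fin (n + 3))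
    (u : Fin (n + 3) ⊕ (cycleGraph (n + 3)).edgeSet) (h : (middleGraph _).Adj (.inl i) u) :
    u ∈ Set.range ![.inr (cycleEdge n (i - 1)), .inr (cycleEdge n i)] := by
  rcases u with v | e
  · exact absurd h middleGraph_adj_inl_inl
  · obtain ⟨j, rfl⟩ := cycleEdge_surjective e
    rcases middleGraph_cycleGraph_adj_inl_inr.1 h with rfl | rfl
    · exact ⟨1, rfl⟩
    · exact ⟨0, by simp⟩

lemma middleGraph_cycleGraph_inr_adj_mem_range (i : Fin (n + 3))
    (u : Fin (n + 3) ⊕ (cycleGraph (n + 3)).edgeSet)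
    (h : (middleGraph _).Adj (.inr (cycleEdge n i)) u) :
    u ∈ Set.range ![.inl i, .inl (i + 1), .inr (cycleEdge n (i - 1)), .inr (cycleEdge n (i + 1))] := by
  rcases u with v | e
  · rcases mem_cycleEdge.1 (middleGraph_adj_inr_inl.1 h) with rfl | rfl
    · exact ⟨0, rfl⟩
    · exact ⟨1, rfl⟩
  · obtain ⟨j, rfl⟩ := cycleEdge_surjective e
    rcases middleGraph_cycleGraph_adj_inr_inr.1 h with rfl | rfl
    · exact ⟨2, rfl⟩
    · exact ⟨3, rfl⟩

end CycleEdges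

lemma four_mul_le_three_mul_rdfWeight {n : ℕ} [Fintype (cycleGraph (n + 3)).edgeSet]
    {f : Fin (n + 3) ⊕ (cycleGraph (n + 3)).edgeSet → Finset (Fin 3)}
    (hf : IsRDF (middleGraph (cycleGraph (n + 3))) 3 f) :
    4 * (n + 3) ≤ 3 * rdfWeight f := by
  set a : Fin (n + 3) → ℕ := fun i => (f (.inl i)).card
  set b : Fin (n + 3) → ℕ := fun i => (f (.inr (cycleEdge n i))).card
  have hV (i) (hi : a i = 0) : 3 ≤ b (i - 1) + b i := by
    simpa [Fin.sum_univ_two] using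
      hf.le_sum_card (card_eq_zero.1 hi) _ (middleGraph_cycleGraph_inl_adj_mem_range i)
  have hE (i) (hi : b i = 0) : 3 ≤ b (i - 1) + b (i + 1) + a i + a (i + 1) := by
    have := hf.le_sum_card (card_eq_zero.1 hi) _ (middleGraph_cycleGraph_inr_adj_mem_range i)
    simp only [Fin.sum_univ_four, Matrix.cons_val] at this
    simp only [a, b]
    omega
  calc 4 * (n + 3) ≤ 3 * ∑ i, (a i + b i) := four_mul_le_three_mul_sum_of_cyclic_cover a b hV hE
    _ = 3 * rdfWeight f := by
      rw [rdfWeight_sum, ← Equiv.sum_comp (cycleEdgeEquiv n), sum_add_distrib]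
      rfl

-- `{1, 2}` on the last vertex when `n ≡ 1 (mod 3)` replaces a full edge there, which would cost `3`
def vertexLabel (N k : ℕ) : Finset (Fin 3) :=
  if k % 3 = 2 then {0} else if k % 3 = 0 ∧ k + 1 = N then {1, 2} else ∅

def edgeLabel (N k : ℕ) : Finset (Fin 3) :=
  if k % 3 = 0 ∧ k + 1 < N then univ else ∅

lemma card_vertexLabel (N k : ℕ) :
    (vertexLabel N k).card = if k % 3 = 2 then 1 else if k % 3 = 0 ∧ k + 1 = N then 2 else 0 := by
  unfold vertexLabel
  split_ifs <;> rfl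

lemma card_edgeLabel (N k : ℕ) :
    (edgeLabel N k).card = if k % 3 = 0 ∧ k + 1 < N then 3 else 0 := by
  unfold edgeLabel
  split_ifs <;> rfl

lemma vertexLabel_eq_empty_iff {N k : ℕ} :
    vertexLabel N k = ∅ ↔ k % 3 ≠ 2 ∧ ¬(k % 3 = 0 ∧ k + 1 = N) := by
  rw [← card_eq_zero, card_vertexLabel]
  split_ifs <;> simp_all

lemma edgeLabel_eq_univ_iff {N k : ℕ} : edgeLabel N k = univ ↔ k % 3 = 0 ∧ k + 1 < N := by
  rw [← card_eq_iff_eq_univ, card_edgeLabel, Fintype.card_fin]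
  split_ifs <;> simp_all

lemma edgeLabel_eq_univ_of_vertexLabel_eq_empty {N : ℕ} [NeZero N] {i : Fin N}
    (h : vertexLabel N i = ∅) : edgeLabel N ↑(i - 1) = univ ∨ edgeLabel N i = univ := by
  have := i.isLt
  rw [vertexLabel_eq_empty_iff] at h
  rw [edgeLabel_eq_univ_iff, edgeLabel_eq_univ_iff, Fin.val_sub_one_eq_ite]
  split_ifs <;> omega

lemma edgeLabel_eq_univ_of_edgeLabel_eq_empty {N : ℕ} [NeZero N] (hN : 2 ≤ N) {i : Fin N}
    (h : edgeLabel N i = ∅) :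
    edgeLabel N ↑(i - 1) = univ ∨ edgeLabel N ↑(i + 1) = univ ∨
      vertexLabel N i ∪ vertexLabel N ↑(i + 1) = univ := by
  have := i.isLt
  by_cases hlast : (i : ℕ) % 3 = 2 ∧ (i : ℕ) + 2 = N
  · have hsucc : ((i + 1 : Fin N) : ℕ) = i + 1 := by rw [Fin.val_add_one_eq_ite, if_neg (by omega)]
    rw [hsucc, vertexLabel, vertexLabel, if_pos hlast.1, if_neg (by omega), if_pos (by omega)]
    exact Or.inr (Or.inr (by decide))
  · have h' : ¬((i : ℕ) % 3 = 0 ∧ (i : ℕ) + 1 < N) := fun h' =>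
      univ_nonempty.ne_empty ((edgeLabel_eq_univ_iff.2 h').symm.trans h)
    refine Or.imp_right Or.inl ?_
    rw [edgeLabel_eq_univ_iff, edgeLabel_eq_univ_iff, Fin.val_sub_one_eq_ite, Fin.val_add_one_eq_ite]
    split_ifs <;> omega

lemma sum_range_periodic (M : ℕ) :
    ∑ k ∈ range M, (if k % 3 = 0 then 3 else if k % 3 = 2 then 1 else 0) =
      4 * (M / 3) + if M % 3 = 0 then 0 else 3 := by
  induction M with
  | zero => rfl
  | succ M ih =>
    rw [sum_range_succ, ih]
    split_ifs <;> omega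

lemma sum_card_vertexLabel_add_card_edgeLabel (N : ℕ) :
    ∑ k ∈ range N, ((vertexLabel N k).card + (edgeLabel N k).card) = (4 * N + 2) / 3 := by
  rcases N with _ | M
  · rfl
  have hinit : ∀ k ∈ range M, (vertexLabel (M + 1) k).card + (edgeLabel (M + 1) k).card =
      if k % 3 = 0 then 3 else if k % 3 = 2 then 1 else 0 := by
    intro k hk
    have := mem_range.1 hk
    rw [card_vertexLabel, card_edgeLabel]
    split_ifs <;> omega
  rw [sum_range_succ, sum_congr rfl hinit, sum_range_periodic, card_vertexLabel, card_edgeLabel]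
  split_ifs <;> omega

section CycleRDF

variable (n : ℕ)

noncomputable def cycleRDF : Fin (n + 3) ⊕ (cycleGraph (n + 3)).edgeSet → Finset (Fin 3) :=
  Sum.elim (fun i => vertexLabel (n + 3) i) (fun e => edgeLabel (n + 3) ((cycleEdgeEquiv n).symm e))

variable {n}

lemma cycleRDF_inr_cycleEdge (i : Fin (n + 3)) :
    cycleRDF n (.inr (cycleEdge n i)) = edgeLabel (n + 3) i :=
  congrArg (edgeLabel (n + 3) ∘ Fin.val) ((cycleEdgeEquiv n).symm_apply_apply i)

lemma isRDF_cycleRDF : IsRDF (middleGraph (cycleGraph (n + 3))) 3 (cycleRDF n) := by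
  refine isRDF_of_forall_exists_union ?_
  rintro (i | e) hw
  · have hprev := middleGraph_cycleGraph_adj_inl_inr.2 (Or.inr (sub_add_cancel i 1).symm)
    have hnext := middleGraph_cycleGraph_adj_inl_inr.2 (Or.inl (rfl : i = i))
    rcases edgeLabel_eq_univ_of_vertexLabel_eq_empty hw with h | h
    · exact ⟨_, _, hprev, hprev, by rw [cycleRDF_inr_cycleEdge, h, union_self]⟩
    · exact ⟨_, _, hnext, hnext, by rw [cycleRDF_inr_cycleEdge, h, union_self]⟩
  · obtain ⟨i, rfl⟩ := cycleEdge_surjective e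
    rw [cycleRDF_inr_cycleEdge] at hw
    have hprev := middleGraph_cycleGraph_adj_inr_inr.2 (Or.inl rfl : i - 1 = i - 1 ∨ _)
    have hnext := middleGraph_cycleGraph_adj_inr_inr.2 (Or.inr rfl : _ ∨ i + 1 = i + 1)
    rcases edgeLabel_eq_univ_of_edgeLabel_eq_empty (by omega) hw with h | h | h
    · exact ⟨_, _, hprev, hprev, by rw [cycleRDF_inr_cycleEdge, h, union_self]⟩
    · exact ⟨_, _, hnext, hnext, by rw [cycleRDF_inr_cycleEdge, h, union_self]⟩
    · exact ⟨.inl i, .inl (i + 1), middleGraph_adj_inr_inl.2 (mem_cycleEdge.2 (Or.inl rfl)),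
        middleGraph_adj_inr_inl.2 (mem_cycleEdge.2 (Or.inr rfl)), h⟩

lemma rdfWeight_cycleRDF [Fintype (cycleGraph (n + 3)).edgeSet] :
    rdfWeight (cycleRDF n) = (4 * (n + 3) + 2) / 3 := by
  rw [rdfWeight_sum, ← Equiv.sum_comp (cycleEdgeEquiv n) (fun e => (cycleRDF n (.inr e)).card)]
  simp only [cycleRDF, Sum.elim_inl, Sum.elim_inr, Equiv.symm_apply_apply]
  rw [← sum_add_distrib,
    Fin.sum_univ_eq_sum_range (fun k => (vertexLabel (n + 3) k).card + (edgeLabel (n + 3) k).card),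
    sum_card_vertexLabel_add_card_edgeLabel]

end CycleRDF

theorem rdn_middleGraph_cycleGraph (n : ℕ) [Fintype (cycleGraph (n + 3)).edgeSet] :
    rdn (middleGraph (cycleGraph (n + 3))) 3 = (4 * (n + 3) + 2) / 3 := by
  refine le_antisymm (rdfWeight_cycleRDF (n := n) ▸ rdn_le_rdfWeight isRDF_cycleRDF) ?_
  obtain ⟨f, hf, hweight⟩ := exists_isRDF_rdfWeight_eq_rdn (middleGraph (cycleGraph (n + 3))) 3
  have := four_mul_le_three_mul_rdfWeight hf
  omega

/-- middle 3-rainbow domination number of cycles. -/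
theorem stmt7 (n : ℕ) (hn : 3 ≤ n) :
    (n % 3 = 1 → mrdn (cycleGraph n) 3 = (4 * n + 2) / 3) ∧
    (n % 3 = 2 → mrdn (cycleGraph n) 3 = (4 * n + 1) / 3) ∧
    (n % 3 = 0 → mrdn (cycleGraph n) 3 = 4 * n / 3) := by
  obtain ⟨n, rfl⟩ := Nat.exists_eq_add_of_le' hn
  have h : mrdn (cycleGraph (n + 3)) 3 = (4 * (n + 3) + 2) / 3 := by
    unfold mrdn
    convert rdn_middleGraph_cycleGraph n
  refine ⟨fun _ => ?_, fun _ => ?_, fun _ => ?_⟩ <;> omega
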